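/- Let κ and λ be infinite cardinals with κ regular and κ ≤ λ, let X ⊆ ᵏλ be a subspace of weight at most λ, and let S be a positively totally ordered monoid such that Deg(S) is infinite and S⁺ contains a coinitial sequence (a_i)_{i<δ} which is nowhere Archimedean decreasing, i.e., a_i ≪ a_j whenever j < i < δ. Let (X, 𝔐, μ) be a weak λ⁺-measure space with μ taking values in S, and let U ⊆ X be an open set with μ(U) > 0. Then there is x ∈ U such that either {x} ∉ 𝔐 or μ({x}) > 0. -/

import Mathlib

open Cardinal Set

noncomputable section

/-- The type of `ι`-indexed sequences in `A`, as a type synonym carrying the bounded topology. -/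
def GSeq (ι A : Type) : Type := ι → A

/-- The bounded topology on `GSeq ι A`: the topology generated by the cones
`N_s = {y | ∀ i < b, y i = x i}`. -/
instance GSeq.topologicalSpace (ι A : Type) [LinearOrder ι] : TopologicalSpace (GSeq ι A) :=
  TopologicalSpace.generateFrom
    {C : Set (GSeq ι A) | ∃ (x : ι → A) (b : ι), C = {y : GSeq ι A | ∀ i, i < b → y i = x i}}

/-- The weight of a topological space: the least cardinality of a basis for its topology. -/
def tweight (X : Type) [TopologicalSpace X] : Cardinal :=
  ⨅ B : {B : Set (Set X) // TopologicalSpace.IsTopologicalBasis B}, #↥(B.1)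

/-- `S` is a positively totally ordered monoid (on top of given `AddMonoid` and `LinearOrder`
structures): the addition is weakly monotone in both arguments, `0` is the least element, and
the positive cone `S⁺ = {a | 0 < a}` is nonempty. -/
structure IsPTOM (S : Type*) [AddMonoid S] [LinearOrder S] : Prop where
  add_le_add : ∀ a b c d : S, a ≤ b → c ≤ d → a + c ≤ b + d
  zero_le : ∀ a : S, 0 ≤ a
  exists_pos : ∃ a : S, 0 < a

/-- The sum of `f` over a finite set `F` of indices, taken in increasing order of the indices. -/
def finSum {ι : Type*} [LinearOrder ι] {S : Type*} [AddMonoid S] (f : ι → S) (F : Finset ι) : S :=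
  ((F.sort (· ≤ ·)).map f).sum

/-- `μ` is a continuous measure: every singleton is measurable and has measure `0`. -/
def MeasureContinuous {X : Type} [TopologicalSpace X] {S : Type*} [Zero S]
    (M : Set (Set X)) (μ : Set X → S) : Prop :=
  ∀ x : X, {x} ∈ M ∧ μ {x} = 0

/-- `(X, M, μ)` is a weak `λ⁺`-measure space (with `lam` playing the role of `λ`):
`M` contains all open sets and is closed under unions of at most `lam` many sets,
and `μ` satisfies the axioms (M1)-(M5). -/
structure IsWeakMeasureSpace (X : Type) [TopologicalSpace X] (lam : Cardinal)
    (S : Type*) [AddMonoid S] [LinearOrder S] (M : Set (Set X)) (μ : Set X → S) : Prop where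
  open_mem : ∀ U : Set X, IsOpen U → U ∈ M
  sUnion_mem : ∀ 𝒜 : Set (Set X), 𝒜 ⊆ M → #↥𝒜 ≤ lam → ⋃₀ 𝒜 ∈ M
  measure_empty : μ ∅ = 0
  measure_univ_pos : 0 < μ Set.univ
  mono : ∀ A B : Set X, A ∈ M → B ∈ M → A ⊆ B → μ A ≤ μ B
  additive : ∀ (γ : Ordinal) (A : γ.ToType → Set X), γ.card ≤ lam →
    (∀ i, A i ∈ M) → Pairwise (Function.onFun Disjoint A) →
    IsLUB {s : S | ∃ F : Finset γ.ToType, s = finSum (fun i => μ (A i)) F} (μ (⋃ i, A i))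
  point_reg : ∀ (x : X) (γ : Ordinal) (A : γ.ToType → Set X),
    {x} ∈ M → γ.card ≤ lam →
    (∀ i, IsOpen (A i) ∧ x ∈ A i) →
    (∀ U : Set X, IsOpen U → x ∈ U → ∃ i, A i ⊆ U) →
    IsGLB (Set.range fun i => μ (A i)) (μ {x})

/-- The degree of `S`: the least cardinality of a subset of the positive cone `S⁺`
that is coinitial in `S⁺`. -/
def degree (S : Type*) [Zero S] [LinearOrder S] : Cardinal :=
  ⨅ A : {A : Set S // (∀ a ∈ A, 0 < a) ∧ ∀ ε : S, 0 < ε → ∃ a ∈ A, a ≤ ε}, #↥(A.1)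

/-! If every point of `U` were a measurable null set, point regularity would give around each
point of `U` a cone inside `U` of measure below a tiny element `a i₂` of the coinitial sequence.
The cones of least height with this property partition `U`, and being disjoint and open there
are at most `λ` of them. Additivity then bounds `μ U` by `sup n • a i₂ ≤ a i₁`, which is below
`μ U` once `a i₀ ≤ μ U` with `i₀ < i₁ < i₂`. -/

namespace GSeq

variable {ι A : Type} [LinearOrder ι]

def cone (x : GSeq ι A) (b : ι) : Set (GSeq ι A) := {y | ∀ i, i < b → y i = x i}

theorem mem_cone_self (x : GSeq ι A) (b : ι) : x ∈ cone x b := fun _ _ => rfl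

theorem isOpen_cone (x : GSeq ι A) (b : ι) : IsOpen (cone x b) :=
  TopologicalSpace.GenerateOpen.basic _ ⟨x, b, rfl⟩

theorem cone_anti (x : GSeq ι A) : Antitone (cone x) :=
  fun _ _ hbc _ hy i hi => hy i (hi.trans_le hbc)

theorem cone_eq_of_mem {x y : GSeq ι A} {b : ι} (h : y ∈ cone x b) : cone y b = cone x b := by
  ext z
  exact ⟨fun hz i hi => (hz i hi).trans (h i hi), fun hz i hi => (hz i hi).trans (h i hi).symm⟩

theorem mem_cone_of_le_of_inter_nonempty {x y : GSeq ι A} {b c : ι} (hbc : b ≤ c)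
    (h : (cone x b ∩ cone y c).Nonempty) : y ∈ cone x b := by
  obtain ⟨z, hzx, hzy⟩ := h
  intro i hi
  exact (hzy i (hi.trans_le hbc)).symm.trans (hzx i hi)

theorem exists_cone_subset [Nonempty ι] {V : Set (GSeq ι A)} (hV : IsOpen V) {x : GSeq ι A}
    (hx : x ∈ V) : ∃ b, cone x b ⊆ V := by
  induction hV generalizing x with
  | basic C hC =>
    obtain ⟨z, b, rfl⟩ := hC
    exact ⟨b, fun y hy i hi => (hy i hi).trans (hx i hi)⟩
  | univ => exact ⟨Classical.arbitrary ι, subset_univ _⟩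
  | inter s t _ _ ihs iht =>
    obtain ⟨b₁, h₁⟩ := ihs hx.1
    obtain ⟨b₂, h₂⟩ := iht hx.2
    exact ⟨max b₁ b₂, fun y hy =>
      ⟨h₁ (cone_anti x (le_max_left _ _) hy), h₂ (cone_anti x (le_max_right _ _) hy)⟩⟩
  | sUnion 𝒮 _ ih =>
    obtain ⟨t, ht, hxt⟩ := hx
    obtain ⟨b, hb⟩ := ih t ht hxt
    exact ⟨b, hb.trans (subset_sUnion_of_mem ht)⟩

/-- Two cones that meet are nested, and minimality of the height forces nested cones of least
height with `P` to coincide. -/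
theorem exists_pairwiseDisjoint_cones_cover [WellFoundedLT ι] {X : Set (GSeq ι A)}
    {P : Set X → Prop} {U : Set X} (hP : ∀ x ∈ U, ∃ b, P (Subtype.val ⁻¹' cone x.1 b)) :
    ∃ 𝒟 : Set (Set X), 𝒟.PairwiseDisjoint id ∧ U ⊆ ⋃₀ 𝒟 ∧
      ∀ V ∈ 𝒟, P V ∧ IsOpen V ∧ V.Nonempty := by
  let C : X → ι → Set X := fun x b => Subtype.val ⁻¹' cone x.1 b
  let 𝒟 : Set (Set X) :=
    {V | ∃ x b, V = C x b ∧ P (C x b) ∧ ∀ c, P (C x c) → b ≤ c}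
  have eq_of_le_of_inter_nonempty : ∀ x y b c, b ≤ c → P (C x b) → (∀ c', P (C y c') → c ≤ c') →
      (C x b ∩ C y c).Nonempty → C x b = C y c := by
    rintro x y b c hbc hPx hminy ⟨z, hzx, hzy⟩
    have hy : y.1 ∈ cone x.1 b := mem_cone_of_le_of_inter_nonempty hbc ⟨z.1, hzx, hzy⟩
    have hCy : C y b = C x b := congrArg (Subtype.val ⁻¹' ·) (cone_eq_of_mem hy)
    have hcb : c ≤ b := hminy b (hCy ▸ hPx)
    rw [← hCy, le_antisymm hbc hcb]
  refine ⟨𝒟, ?_, ?_, ?_⟩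
  · rintro _ ⟨x, b, rfl, hPx, hminx⟩ _ ⟨y, c, rfl, hPy, hminy⟩ hne
    contrapose! hne
    have hxy := Set.not_disjoint_iff_nonempty_inter.mp hne
    rcases le_total b c with hbc | hcb
    · exact eq_of_le_of_inter_nonempty x y b c hbc hPx hminy hxy
    · exact (eq_of_le_of_inter_nonempty y x c b hcb hPy hminx (Set.inter_comm _ _ ▸ hxy)).symm
  · intro x hx
    obtain ⟨b, hPb, hmin⟩ := wellFounded_lt.has_min {b | P (C x b)} (hP x hx)
    exact ⟨C x b, ⟨x, b, rfl, hPb, fun c hc => not_lt.mp (hmin c hc)⟩, mem_cone_self _ _⟩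
  · rintro _ ⟨x, b, rfl, hPx, -⟩
    exact ⟨hPx, (isOpen_cone _ _).preimage continuous_subtype_val, x, mem_cone_self _ _⟩

end GSeq

theorem mk_le_tweight_of_pairwiseDisjoint {X : Type} [TopologicalSpace X] {𝒟 : Set (Set X)}
    (hdisj : 𝒟.PairwiseDisjoint id) (hopen : ∀ V ∈ 𝒟, IsOpen V) (hne : ∀ V ∈ 𝒟, V.Nonempty) :
    #𝒟 ≤ tweight X := by
  have : Nonempty {B : Set (Set X) // TopologicalSpace.IsTopologicalBasis B} :=
    ⟨⟨_, TopologicalSpace.isTopologicalBasis_opens⟩⟩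
  refine le_ciInf fun ⟨B, hB⟩ => ?_
  have hpick : ∀ V : 𝒟, ∃ W ∈ B, W.Nonempty ∧ W ⊆ V := by
    rintro ⟨V, hV⟩
    obtain ⟨x, hx⟩ := hne V hV
    obtain ⟨W, hWB, hxW, hWV⟩ := hB.exists_subset_of_mem_open hx (hopen V hV)
    exact ⟨W, hWB, ⟨x, hxW⟩, hWV⟩
  choose f hfB hfne hfsub using hpick
  refine Cardinal.mk_le_of_injective (f := fun V => (⟨f V, hfB V⟩ : B)) fun V W hVW => ?_
  obtain ⟨x, hx⟩ := hfne V
  have hxW : x ∈ f W := by rwa [← Subtype.mk.inj hVW]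
  exact Subtype.ext (hdisj.elim_set V.2 W.2 x (hfsub V hx) (hfsub W hxW))

theorem IsPTOM.addLeftMono {S : Type} [AddMonoid S] [LinearOrder S] (hS : IsPTOM S) :
    AddLeftMono S :=
  ⟨fun _ _ _ h => hS.add_le_add _ _ _ _ le_rfl h⟩

theorem IsPTOM.addRightMono {S : Type} [AddMonoid S] [LinearOrder S] (hS : IsPTOM S) :
    AddRightMono S :=
  ⟨fun _ _ _ h => hS.add_le_add _ _ _ _ h le_rfl⟩

theorem IsPTOM.finSum_le_card_nsmul {ι : Type*} {S : Type} [LinearOrder ι] [AddMonoid S]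
    [LinearOrder S] (hS : IsPTOM S) {f : ι → S} {F : Finset ι} {c : S} (hf : ∀ i ∈ F, f i ≤ c) :
    finSum f F ≤ F.card • c := by
  have := hS.addLeftMono
  have := hS.addRightMono
  have h := List.sum_le_card_nsmul ((F.sort (· ≤ ·)).map f) c (by
    simp only [List.mem_map, Finset.mem_sort]
    rintro _ ⟨i, hi, rfl⟩
    exact hf i hi)
  rwa [List.length_map, Finset.length_sort] at h

theorem degree_le_one {S : Type} [Zero S] [LinearOrder S] {a : S} (ha : 0 < a)
    (hmin : ∀ ε : S, 0 < ε → a ≤ ε) : degree S ≤ 1 := by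
  have h : degree S ≤ #({a} : Set S) :=
    ciInf_le' (fun A : {A : Set S // (∀ a ∈ A, 0 < a) ∧ ∀ ε : S, 0 < ε → ∃ a ∈ A, a ≤ ε} => #A.1)
      ⟨{a}, fun b hb => hb ▸ ha, fun ε hε => ⟨a, rfl, hmin ε hε⟩⟩
  simpa using h

theorem exists_gt_of_one_lt_degree {S : Type} {ι : Type*} [Zero S] [LinearOrder S] [LinearOrder ι]
    (hdeg : 1 < degree S) {a : ι → S} (hapos : ∀ i, 0 < a i)
    (hacoin : ∀ ε : S, 0 < ε → ∃ i, a i ≤ ε) (hanti : StrictAnti a) (i : ι) : ∃ j, i < j := by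
  by_contra! hmax
  refine hdeg.not_ge (degree_le_one (hapos i) fun ε hε => ?_)
  obtain ⟨j, hj⟩ := hacoin ε hε
  exact (hanti.antitone (hmax j)).trans hj

namespace IsWeakMeasureSpace

variable {lam : Cardinal} {S : Type} [AddMonoid S] [LinearOrder S]

theorem measure_sUnion_le {X : Type} [TopologicalSpace X] {M : Set (Set X)} {μ : Set X → S}
    (hμ : IsWeakMeasureSpace X lam S M μ) (hS : IsPTOM S)
    {𝒟 : Set (Set X)} (hM : 𝒟 ⊆ M) (hcard : #𝒟 ≤ lam) (hdisj : 𝒟.PairwiseDisjoint id)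
    {c d : S} (hc : ∀ V ∈ 𝒟, μ V ≤ c) (hd : ∀ n : ℕ, n • c ≤ d) : μ (⋃₀ 𝒟) ≤ d := by
  obtain ⟨e⟩ : Nonempty ((#𝒟).ord.ToType ≃ 𝒟) := Cardinal.eq.mp (by simp)
  have hunion : ⋃ i, (e i : Set X) = ⋃₀ 𝒟 := by
    rw [sUnion_eq_iUnion, e.surjective.iUnion_comp (fun V : 𝒟 => (V : Set X))]
  have hlub := hμ.additive _ (fun i => e i) (by simpa using hcard) (fun i => hM (e i).2)
    fun i j hij => hdisj (e i).2 (e j).2 fun h => hij (e.injective (Subtype.ext h))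
  rw [hunion] at hlub
  refine hlub.2 ?_
  rintro _ ⟨F, rfl⟩
  exact (hS.finSum_le_card_nsmul fun i _ => hc _ (e i).2).trans (hd _)

theorem exists_cone_subset_measure_lt {γ : Ordinal} [Nonempty γ.ToType] {A : Type}
    {X : Set (GSeq γ.ToType A)} {M : Set (Set X)} {μ : Set X → S}
    (hμ : IsWeakMeasureSpace X lam S M μ) (hγ : γ.card ≤ lam) {x : X} (hxM : {x} ∈ M)
    {U : Set X} (hU : IsOpen U) (hxU : x ∈ U) {ε : S} (hε : μ {x} < ε) :
    ∃ b, Subtype.val ⁻¹' GSeq.cone x.1 b ⊆ U ∧ μ (Subtype.val ⁻¹' GSeq.cone x.1 b) < ε := by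
  let C : γ.ToType → Set X := fun b => Subtype.val ⁻¹' GSeq.cone x.1 b
  have hCopen : ∀ b, IsOpen (C b) := fun b => (GSeq.isOpen_cone _ _).preimage continuous_subtype_val
  have hnhds : ∀ V : Set X, IsOpen V → x ∈ V → ∃ b, C b ⊆ V := by
    intro V hV hxV
    obtain ⟨W, hW, rfl⟩ := isOpen_induced_iff.mp hV
    obtain ⟨b, hb⟩ := GSeq.exists_cone_subset hW hxV
    exact ⟨b, preimage_mono hb⟩
  have hglb := hμ.point_reg x γ C hxM hγ (fun b => ⟨hCopen b, GSeq.mem_cone_self _ _⟩) hnhds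
  obtain ⟨_, ⟨b₁, rfl⟩, hb₁⟩ := (isGLB_lt_iff hglb).mp hε
  obtain ⟨b₀, hb₀⟩ := hnhds U hU hxU
  have hanti : Antitone C := fun _ _ h => preimage_mono (GSeq.cone_anti _ h)
  refine ⟨max b₀ b₁, (hanti (le_max_left _ _)).trans hb₀, lt_of_le_of_lt ?_ hb₁⟩
  exact hμ.mono _ _ (hμ.open_mem _ (hCopen _)) (hμ.open_mem _ (hCopen _)) (hanti (le_max_right _ _))

end IsWeakMeasureSpace

theorem statement_7_general (κ lam : Cardinal) (hκ : κ.IsRegular) (hκlam : κ ≤ lam)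
    (X : Set (GSeq κ.ord.ToType lam.ord.ToType)) (hw : tweight ↥X ≤ lam)
    (S : Type) [AddMonoid S] [LinearOrder S] (hS : IsPTOM S)
    (hdeg : ℵ₀ ≤ degree S)
    (δ : Ordinal) (a : δ.ToType → S)
    (hapos : ∀ i, 0 < a i)
    (hacoin : ∀ ε : S, 0 < ε → ∃ i, a i ≤ ε)
    (hana : ∀ i j : δ.ToType, j < i → ∀ n : ℕ, n • a i < a j)
    (M : Set (Set ↥X)) (μ : Set ↥X → S)
    (hμ : IsWeakMeasureSpace ↥X lam S M μ)
    (U : Set ↥X) (hU : IsOpen U) (hUpos : 0 < μ U) :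
    ∃ x ∈ U, ({x} : Set ↥X) ∉ M ∨ 0 < μ {x} := by
  by_contra! hnull
  have : Nonempty κ.ord.ToType :=
    Ordinal.nonempty_toType_iff.mpr (Cardinal.ord_eq_zero.not.mpr hκ.pos.ne')
  have hanti : StrictAnti a := fun j i hji => by simpa using hana i j hji 1
  have hnext := exists_gt_of_one_lt_degree (one_lt_aleph0.trans_le hdeg) hapos hacoin hanti
  obtain ⟨i₀, hi₀⟩ := hacoin (μ U) hUpos
  obtain ⟨i₁, hi₀₁⟩ := hnext i₀
  obtain ⟨i₂, hi₁₂⟩ := hnext i₁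
  obtain ⟨𝒟, hdisj, hcover, h𝒟⟩ :=
    GSeq.exists_pairwiseDisjoint_cones_cover (P := fun V => V ⊆ U ∧ μ V < a i₂) fun x hx =>
      hμ.exists_cone_subset_measure_lt (by simpa using hκlam) (hnull x hx).1 hU hx
        ((hnull x hx).2.trans_lt (hapos i₂))
  have hU𝒟 : ⋃₀ 𝒟 = U := (sUnion_subset fun V hV => (h𝒟 V hV).1.1).antisymm hcover
  have hcard : #𝒟 ≤ lam := (mk_le_tweight_of_pairwiseDisjoint hdisj
    (fun V hV => (h𝒟 V hV).2.1) fun V hV => (h𝒟 V hV).2.2).trans hw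
  have hμU : μ U ≤ a i₁ := hU𝒟 ▸ hμ.measure_sUnion_le hS (fun V hV => hμ.open_mem _ (h𝒟 V hV).2.1)
    hcard hdisj (fun V hV => (h𝒟 V hV).1.2.le) fun n => (hana i₂ i₁ hi₁₂ n).le
  exact (hμU.trans_lt (hanti hi₀₁)).not_ge hi₀

/-- if `S` has infinite degree and `S⁺` contains a coinitial, nowhere Archimedean
decreasing sequence, and `(X, 𝔐, μ)` is a weak `λ⁺`-measure space on some `X ⊆ ᵏλ` of weight at
most `λ`, then every open `U` of positive measure contains a point that is either
non-measurable or of positive measure. -/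
theorem statement_7 (κ lam : Cardinal) (hκ : κ.IsRegular) (hκlam : κ ≤ lam) (hlam : ℵ₀ ≤ lam)
    (X : Set (GSeq κ.ord.ToType lam.ord.ToType)) (hw : tweight ↥X ≤ lam)
    (S : Type) [AddMonoid S] [LinearOrder S] (hS : IsPTOM S)
    (hdeg : ℵ₀ ≤ degree S)
    (δ : Ordinal) (a : δ.ToType → S)
    (hapos : ∀ i, 0 < a i)
    (hacoin : ∀ ε : S, 0 < ε → ∃ i, a i ≤ ε)
    (hana : ∀ i j : δ.ToType, j < i → ∀ n : ℕ, n • a i < a j)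
    (M : Set (Set ↥X)) (μ : Set ↥X → S)
    (hμ : IsWeakMeasureSpace ↥X lam S M μ)
    (U : Set ↥X) (hU : IsOpen U) (hUpos : 0 < μ U) :
    ∃ x ∈ U, ({x} : Set ↥X) ∉ M ∨ 0 < μ {x} :=
  statement_7_general κ lam hκ hκlam X hw S hS hdeg δ a hapos hacoin hana M μ hμ U hU hUpos
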